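/- For all integers m, n with 1 ≤ m ≤ n, one has R_m(m,n) ≤ 2^n · C(n,m) · (2^{−m}·C(m, ⌊m/2⌋))^{n−m}, where C(n,m) and C(m, ⌊m/2⌋) are binomial coefficients. -/

import Mathlib

open scoped Classical

noncomputable section

/-- The `{±1}`-vector in `ℝ^n` encoded by a Boolean vector. -/
def signVec {n : ℕ} (u : Fin n → Bool) : Fin n → ℝ := fun i => if u i then 1 else -1

/-- `v` is a `{±1}`-vector: all coordinates lie in `{-1, 1}`. -/
def IsPM {n : ℕ} (v : Fin n → ℝ) : Prop := ∀ i, v i = 1 ∨ v i = -1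

/-- The real span of the `{±1}`-vectors encoded by `W` contains a `{±1}`-vector different
from `±(W j)` for all `j`. -/
def KSOEvent {p n : ℕ} (W : Fin p → Fin n → Bool) : Prop :=
  ∃ x : Fin n → ℝ,
    x ∈ Submodule.span ℝ (Set.range fun j => signVec (W j)) ∧ IsPM x ∧
    ∀ j, x ≠ signVec (W j) ∧ x ≠ -signVec (W j)

/-- `ℙ(p, n)`: the probability that the real span of `p` uniformly random `{±1}`-vectors
in `ℝ^n` contains a `{±1}`-vector different from `±v_1, …, ±v_p`. -/
def probKSO (p n : ℕ) : ℝ :=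
  ((Finset.univ.filter fun W : Fin p → Fin n → Bool => KSOEvent W).card : ℝ) / 2 ^ (p * n)

/-- Some three of the vectors encoded by `W` have a real linear combination that is a
`{±1}`-vector different from `±` those three vectors. -/
def P3Event {p n : ℕ} (W : Fin p → Fin n → Bool) : Prop :=
  ∃ j₁ j₂ j₃ : Fin p, j₁ ≠ j₂ ∧ j₁ ≠ j₃ ∧ j₂ ≠ j₃ ∧
    ∃ a b c : ℝ, ∃ x : Fin n → ℝ,
      x = a • signVec (W j₁) + b • signVec (W j₂) + c • signVec (W j₃) ∧ IsPM x ∧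
      (x ≠ signVec (W j₁) ∧ x ≠ -signVec (W j₁)) ∧
      (x ≠ signVec (W j₂) ∧ x ≠ -signVec (W j₂)) ∧
      (x ≠ signVec (W j₃) ∧ x ≠ -signVec (W j₃))

/-- `ℙ₃(p, n)`: the probability of `P3Event` for `p` uniformly random `{±1}`-vectors in `ℝ^n`. -/
def probP3 (p n : ℕ) : ℝ :=
  ((Finset.univ.filter fun W : Fin p → Fin n → Bool => P3Event W).card : ℝ) / 2 ^ (p * n)

/-- Some `m` of the vectors encoded by `W` have a linear combination with all coefficients
nonzero that is a `{±1}`-vector. -/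
def PmEvent (m : ℕ) {p n : ℕ} (W : Fin p → Fin n → Bool) : Prop :=
  ∃ j : Fin m → Fin p, Function.Injective j ∧
    ∃ α : Fin m → ℝ, (∀ i, α i ≠ 0) ∧ IsPM (∑ i, α i • signVec (W (j i)))

/-- `ℙ_m(p, n)`: the probability of `PmEvent m` for `p` uniformly random `{±1}`-vectors
in `ℝ^n`. -/
def probPm (m p n : ℕ) : ℝ :=
  ((Finset.univ.filter fun W : Fin p → Fin n → Bool => PmEvent m W).card : ℝ) / 2 ^ (p * n)

/-- `𝓜_m(p, n)`: the set of `p × n` `{±1}`-matrices (encoded row-wise by Booleans) with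
linearly independent rows, some `m` of which have a linear combination with nonzero
coefficients that is a `{±1}`-vector. -/
def MmSet (m p n : ℕ) : Finset (Fin p → Fin n → Bool) :=
  Finset.univ.filter fun M =>
    (LinearIndependent ℝ fun i => signVec (M i)) ∧ PmEvent m M

/-- `R_m(p, n) = |𝓜_m(p, n)| / 2^(p n)`. -/
def Rm (m p n : ℕ) : ℝ := ((MmSet m p n).card : ℝ) / 2 ^ (p * n)

/-- `ℙ_{p,n}`: the probability that a uniformly random `p × n` `{±1}`-matrix has rank
less than `p`, i.e. its rows are linearly dependent over `ℝ`. -/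
def probSingular (p n : ℕ) : ℝ :=
  ((Finset.univ.filter fun M : Fin p → Fin n → Bool =>
      ¬ LinearIndependent ℝ fun i => signVec (M i)).card : ℝ) / 2 ^ (p * n)

/-- The vector `(1, b_1, …, b_n) ∈ E_n ⊂ ℝ^{n+1}` encoded by a Boolean vector. -/
def eVec {n : ℕ} (u : Fin n → Bool) : Fin (n + 1) → ℝ := Fin.cons 1 (signVec u)

/-- The number of ordered `n`-tuples of distinct, linearly independent vectors from `E_n`
whose real span contains a `{±1}`-vector of `ℝ^{n+1}` different from `±w_1, …, ±w_n`. -/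
def KSOECard (n : ℕ) : ℕ :=
  (Finset.univ.filter fun W : Fin n → (Fin n → Bool) =>
    Function.Injective W ∧ (LinearIndependent ℝ fun i => eVec (W i)) ∧
    ∃ x : Fin (n + 1) → ℝ,
      x ∈ Submodule.span ℝ (Set.range fun i => eVec (W i)) ∧ IsPM x ∧
      ∀ i, x ≠ eVec (W i) ∧ x ≠ -eVec (W i)).card

/-- `P(2, n)`: the number of threshold functions of `n` variables. -/
def numThreshold (n : ℕ) : ℕ :=
  (Finset.univ.filter fun f : (Fin n → Bool) → Bool =>
    ∃ a : ℝ, ∃ w : Fin n → ℝ,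
      ∀ x, f x = true ↔ 0 < a + ∑ i, w i * signVec x i).card

/-!
If the rows of `M` are independent, some `m` columns of `M`, indexed by `S`, span `ℝ^m`. The
coefficients `α` of a `{±1}`-combination `x = α M` are then determined by those `m` columns
together with the `m` signs of `x` on `S`: at most `2^(m² + m)` possibilities once `S` is fixed.
Each of the `n - m` remaining columns `c` must satisfy `α ⬝ c = ±1`, and by the Littlewood–Offord
bound (Erdős' proof via Sperner's theorem) at most `2 C(m, ⌊m/2⌋)` sign vectors do. Summing over
the `C(n, m)` choices of `S` and dividing by `2^(mn)` gives the bound.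
-/

open Finset Matrix

lemma abs_signVec {n : ℕ} (c : Fin n → Bool) (i : Fin n) : |signVec c i| = 1 := by
  unfold signVec; split <;> simp

lemma signVec_injective {n : ℕ} : Function.Injective (signVec (n := n)) := by
  intro c c' h
  funext i
  have hi := congrFun h i
  simp only [signVec] at hi
  split_ifs at hi <;> simp_all <;> norm_num at hi

section LittlewoodOfford

variable {m : ℕ} (α : Fin m → ℝ)

/-- Erdős' encoding of the solutions `c` of `α ⬝ᵥ signVec c = t` as an antichain of sets. -/
def posTerms (c : Fin m → Bool) : Finset (Fin m) := {i | 0 < α i * signVec c i}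

lemma mul_signVec_le_of_posTerms_subset {c c' : Fin m → Bool}
    (h : posTerms α c ⊆ posTerms α c') (i : Fin m) :
    α i * signVec c i ≤ α i * signVec c' i := by
  have habs : ∀ d : Fin m → Bool, |α i * signVec d i| = |α i| := fun d => by
    rw [abs_mul, abs_signVec, mul_one]
  by_cases hi : i ∈ posTerms α c
  · have hi' := h hi
    simp only [posTerms, mem_filter, mem_univ, true_and] at hi hi'
    rw [← abs_of_pos hi, ← abs_of_pos hi', habs, habs]
  · simp only [posTerms, mem_filter, mem_univ, true_and, not_lt] at hi
    calc α i * signVec c i = -|α i * signVec c' i| := by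
          rw [habs c', ← habs c, abs_of_nonpos hi, neg_neg]
      _ ≤ _ := neg_abs_le _

lemma eq_of_posTerms_subset (hα : ∀ i, α i ≠ 0) {c c' : Fin m → Bool}
    (h : posTerms α c ⊆ posTerms α c') (hdot : α ⬝ᵥ signVec c = α ⬝ᵥ signVec c') : c = c' := by
  have hterms :=
    (sum_eq_sum_iff_of_le fun i _ => mul_signVec_le_of_posTerms_subset α h i).1 hdot
  exact signVec_injective (funext fun i => mul_left_cancel₀ (hα i) (hterms i (mem_univ i)))

theorem card_dotProduct_signVec_eq_le (hα : ∀ i, α i ≠ 0) (t : ℝ) :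
    #{c : Fin m → Bool | α ⬝ᵥ signVec c = t} ≤ m.choose (m / 2) := by
  set L : Finset (Fin m → Bool) := {c | α ⬝ᵥ signVec c = t}
  have hsub : ∀ c ∈ L, ∀ c' ∈ L, posTerms α c ⊆ posTerms α c' → c = c' := by
    intro c hc c' hc' h
    simp only [L, mem_filter, mem_univ, true_and] at hc hc'
    exact eq_of_posTerms_subset α hα h (hc.trans hc'.symm)
  have hinj : Set.InjOn (posTerms α) L := fun c hc c' hc' h => hsub c hc c' hc' h.le
  have hanti : IsAntichain (· ⊆ ·) (L.image (posTerms α) : Set (Finset (Fin m))) := by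
    rintro _ hS _ hT hne h
    obtain ⟨c, hc, rfl⟩ := mem_image.1 hS
    obtain ⟨c', hc', rfl⟩ := mem_image.1 hT
    exact hne (congrArg _ (hsub c hc c' hc' h))
  simpa [card_image_of_injOn hinj] using hanti.sperner

def pmLevelSet : Finset (Fin m → Bool) := {c | α ⬝ᵥ signVec c = 1 ∨ α ⬝ᵥ signVec c = -1}

theorem card_pmLevelSet_le (hα : ∀ i, α i ≠ 0) : #(pmLevelSet α) ≤ 2 * m.choose (m / 2) := by
  rw [pmLevelSet, filter_or, two_mul]
  exact (card_union_le _ _).trans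
    (add_le_add (card_dotProduct_signVec_eq_le α hα 1) (card_dotProduct_signVec_eq_le α hα (-1)))

end LittlewoodOfford

theorem exists_finset_card_eq_finrank_span_image_eq_top {K V ι : Type*} [DivisionRing K]
    [AddCommGroup V] [Module K V] [FiniteDimensional K V] [Fintype ι] {v : ι → V}
    (hv : Submodule.span K (Set.range v) = ⊤) :
    ∃ S : Finset ι, #S = Module.finrank K V ∧ Submodule.span K (v '' S) = ⊤ := by
  obtain ⟨b, -, -, hspan, hli⟩ :=
    exists_linearIndepOn_extension (linearIndepOn_empty K v) (Set.empty_subset Set.univ)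
  have htop : Submodule.span K (v '' b) = ⊤ := by
    rw [eq_top_iff, ← hv, Submodule.span_le, ← Set.image_univ]
    exact hspan
  refine ⟨b.toFinset, ?_, by rwa [Set.coe_toFinset]⟩
  rw [Set.toFinset_card, ← finrank_span_eq_card hli, ← Set.image_eq_range, htop, finrank_top]

theorem eq_of_forall_dotProduct_eq_of_span_eq_top {R ι : Type*} [CommSemiring R] [Fintype ι]
    {s : Set (ι → R)} (hs : Submodule.span R s = ⊤) {α β : ι → R}
    (h : ∀ v ∈ s, α ⬝ᵥ v = β ⬝ᵥ v) : α = β := by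
  classical
  exact (dotProductEquiv R ι).injective (LinearMap.ext_on hs fun v hv => by simpa using h v hv)

theorem Matrix.span_range_col_eq_top_of_linearIndependent_row {K m n : Type*} [Field K]
    [Fintype m] [Fintype n] {A : Matrix m n K} (h : LinearIndependent K A.row) :
    Submodule.span K (Set.range A.col) = ⊤ := by
  apply Submodule.eq_top_of_finrank_eq
  rw [← rank_eq_finrank_span_cols, h.rank_matrix, Module.finrank_fintype_fun_eq_card]

section Counting

variable {m n : ℕ}

def signMatrix (M : Fin m → Fin n → Bool) : Matrix (Fin m) (Fin n) ℝ := of fun i => signVec (M i)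

lemma signMatrix_col (M : Fin m → Fin n → Bool) (j : Fin n) :
    (signMatrix M).col j = signVec fun i => M i j := rfl

lemma vecMul_signMatrix_apply (M : Fin m → Fin n → Bool) (α : Fin m → ℝ) (j : Fin n) :
    (α ᵥ* signMatrix M) j = α ⬝ᵥ signVec fun i => M i j := rfl

lemma sum_smul_signVec_eq_vecMul (M : Fin m → Fin n → Bool) (α : Fin m → ℝ) :
    ∑ k, α k • signVec (M k) = α ᵥ* signMatrix M :=
  (vecMul_eq_sum α (signMatrix M)).symm

lemma PmEvent.exists_coeffs {M : Fin m → Fin n → Bool} (h : PmEvent m M) :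
    ∃ α : Fin m → ℝ, (∀ i, α i ≠ 0) ∧ IsPM (α ᵥ* signMatrix M) := by
  obtain ⟨j, hj, α, hα, hpm⟩ := h
  let e := Equiv.ofBijective j hj.bijective_of_finite
  refine ⟨α ∘ e.symm, fun k => hα _, ?_⟩
  rw [← sum_smul_signVec_eq_vecMul, ← e.sum_comp]
  simpa [e] using hpm

lemma IsPM.apply_eq_of_decide_eq {x y : Fin n → ℝ} (hx : IsPM x) (hy : IsPM y) {j : Fin n}
    (h : decide (x j = 1) = decide (y j = 1)) : x j = y j := by
  rw [decide_eq_decide] at h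
  rcases hx j with hxj | hxj <;> rcases hy j with hyj | hyj <;> simp_all

lemma card_agree_on_and_cols_mem_le (S : Finset (Fin n)) (M₀ : Fin m → Fin n → Bool)
    (T : Finset (Fin m → Bool)) :
    #{M : Fin m → Fin n → Bool | (∀ j ∈ S, ∀ i, M i j = M₀ i j) ∧ ∀ j ∉ S, (fun i => M i j) ∈ T}
      ≤ #T ^ (n - #S) := by
  have hcard : #(Fintype.piFinset fun _ : ↥Sᶜ => T) = #T ^ (n - #S) := by
    rw [Fintype.card_piFinset, prod_const, card_univ, Fintype.card_coe, card_compl,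
      Fintype.card_fin]
  rw [← hcard]
  refine card_le_card_of_injOn (fun M j i => M i j) (fun M hM => ?_) fun M hM M' hM' h => ?_
  · simp only [mem_coe, mem_filter, mem_univ, true_and, Fintype.mem_piFinset] at hM ⊢
    exact fun j => hM.2 j (mem_compl.1 j.2)
  · simp only [mem_coe, mem_filter, mem_univ, true_and] at hM hM'
    funext i j
    by_cases hj : j ∈ S
    · rw [hM.1 j hj, hM'.1 j hj]
    · exact congrFun (congrFun h ⟨j, mem_compl.2 hj⟩) i

lemma eq_of_vecMul_signMatrix_eq_on {S : Finset (Fin n)} {M M₀ : Fin m → Fin n → Bool}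
    (hspan : Submodule.span ℝ ((signMatrix M₀).col '' S) = ⊤)
    (hcol : ∀ j ∈ S, ∀ i, M i j = M₀ i j) {α α₀ : Fin m → ℝ}
    (hx : ∀ j ∈ S, (α ᵥ* signMatrix M) j = (α₀ ᵥ* signMatrix M₀) j) : α = α₀ := by
  refine eq_of_forall_dotProduct_eq_of_span_eq_top hspan ?_
  rintro _ ⟨j, hj, rfl⟩
  simpa only [vecMul_signMatrix_apply, signMatrix_col, hcol j hj] using hx j hj

def pivotedSet (m : ℕ) (S : Finset (Fin n)) : Finset (Fin m → Fin n → Bool) :=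
  {M | Submodule.span ℝ ((signMatrix M).col '' S) = ⊤ ∧
    ∃ α : Fin m → ℝ, (∀ i, α i ≠ 0) ∧ IsPM (α ᵥ* signMatrix M)}

def pivotKey (S : Finset (Fin n)) (M : Fin m → Fin n → Bool) (α : Fin m → ℝ) :
    ↥S → (Fin m → Bool) × Bool :=
  fun j => (fun i => M i j, decide ((α ᵥ* signMatrix M) j = 1))

lemma agree_on_and_cols_mem_pmLevelSet_of_pivotKey_eq {S : Finset (Fin n)}
    {M M₀ : Fin m → Fin n → Bool} {α α₀ : Fin m → ℝ}
    (hspan : Submodule.span ℝ ((signMatrix M₀).col '' S) = ⊤)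
    (hx : IsPM (α ᵥ* signMatrix M)) (hx₀ : IsPM (α₀ ᵥ* signMatrix M₀))
    (hkey : pivotKey S M α = pivotKey S M₀ α₀) :
    (∀ j ∈ S, ∀ i, M i j = M₀ i j) ∧ ∀ j ∉ S, (fun i => M i j) ∈ pmLevelSet α₀ := by
  have hcol : ∀ j ∈ S, ∀ i, M i j = M₀ i j := fun j hj i =>
    congrFun (congrArg Prod.fst (congrFun hkey ⟨j, hj⟩)) i
  have hα : α = α₀ := eq_of_vecMul_signMatrix_eq_on hspan hcol fun j hj =>
    hx.apply_eq_of_decide_eq hx₀ (congrArg Prod.snd (congrFun hkey ⟨j, hj⟩))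
  refine ⟨hcol, fun j _ => mem_filter.2 ⟨mem_univ _, ?_⟩⟩
  rw [← hα, ← vecMul_signMatrix_apply]
  exact hx j

theorem card_pivotedSet_le {S : Finset (Fin n)} (hS : #S = m) :
    #(pivotedSet m S) ≤ (2 * m.choose (m / 2)) ^ (n - m) * 2 ^ ((m + 1) * m) := by
  choose! α hα hpm using fun M (hM : M ∈ pivotedSet m S) => (mem_filter.1 hM).2.2
  have hfiber : ∀ M₀ ∈ pivotedSet m S,
      #{M ∈ pivotedSet m S | pivotKey S M (α M) = pivotKey S M₀ (α M₀)}
        ≤ (2 * m.choose (m / 2)) ^ (n - m) := by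
    intro M₀ hM₀
    calc _ ≤ #{M : Fin m → Fin n → Bool | (∀ j ∈ S, ∀ i, M i j = M₀ i j) ∧
              ∀ j ∉ S, (fun i => M i j) ∈ pmLevelSet (α M₀)} := by
          refine card_le_card fun M hM => ?_
          obtain ⟨hM, hkey⟩ := mem_filter.1 hM
          exact mem_filter.2 ⟨mem_univ _, agree_on_and_cols_mem_pmLevelSet_of_pivotKey_eq
            (mem_filter.1 hM₀).2.1 (hpm M hM) (hpm M₀ hM₀) hkey⟩
      _ ≤ #(pmLevelSet (α M₀)) ^ (n - #S) := card_agree_on_and_cols_mem_le S M₀ _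
      _ ≤ (2 * m.choose (m / 2)) ^ (n - m) := by
          rw [hS]
          exact Nat.pow_le_pow_left (card_pmLevelSet_le _ (hα M₀ hM₀)) _
  calc #(pivotedSet m S)
      ≤ (2 * m.choose (m / 2)) ^ (n - m) *
          #((pivotedSet m S).image fun M => pivotKey S M (α M)) := by
        refine card_le_mul_card_image _ _ fun b hb => ?_
        obtain ⟨M₀, hM₀, rfl⟩ := mem_image.1 hb
        exact hfiber M₀ hM₀
    _ ≤ (2 * m.choose (m / 2)) ^ (n - m) * 2 ^ ((m + 1) * m) := by
        gcongr
        refine (card_le_univ _).trans_eq ?_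
        rw [Fintype.card_fun, Fintype.card_prod, Fintype.card_fun, Fintype.card_bool,
          Fintype.card_fin, Fintype.card_coe, hS, ← pow_succ, ← pow_mul]

theorem card_MmSet_le :
    #(MmSet m m n) ≤ n.choose m * ((2 * m.choose (m / 2)) ^ (n - m) * 2 ^ ((m + 1) * m)) := by
  have hsub : MmSet m m n ⊆ (powersetCard m univ).biUnion (pivotedSet m) := by
    intro M hM
    obtain ⟨-, hli, hpm⟩ := mem_filter.1 hM
    obtain ⟨S, hS, hspan⟩ := exists_finset_card_eq_finrank_span_image_eq_top
      (Matrix.span_range_col_eq_top_of_linearIndependent_row (A := signMatrix M) hli)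
    rw [Module.finrank_fin_fun] at hS
    exact mem_biUnion.2 ⟨S, mem_powersetCard_univ.2 hS,
      mem_filter.2 ⟨mem_univ _, hspan, hpm.exists_coeffs⟩⟩
  calc #(MmSet m m n) ≤ ∑ S ∈ powersetCard m univ, #(pivotedSet m S) :=
        (card_le_card hsub).trans card_biUnion_le
    _ ≤ ∑ S ∈ powersetCard m (univ : Finset (Fin n)),
          (2 * m.choose (m / 2)) ^ (n - m) * 2 ^ ((m + 1) * m) :=
        sum_le_sum fun S hS => card_pivotedSet_le (mem_powersetCard_univ.1 hS)
    _ = _ := by rw [sum_const, card_powersetCard, card_univ, Fintype.card_fin, smul_eq_mul]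

end Counting

theorem stmt11_general (m n : ℕ) (hmn : m ≤ n) :
    Rm m m n ≤
      2 ^ n * (n.choose m : ℝ) * ((m.choose (m / 2) : ℝ) / 2 ^ m) ^ (n - m) := by
  obtain ⟨e, rfl⟩ := Nat.exists_eq_add_of_le hmn
  rw [Rm, Nat.add_sub_cancel_left, div_le_iff₀ (by positivity)]
  calc ((MmSet m m (m + e)).card : ℝ)
      ≤ (m + e).choose m * ((2 * m.choose (m / 2)) ^ e * 2 ^ ((m + 1) * m)) := by
        exact_mod_cast card_MmSet_le.trans_eq (by rw [Nat.add_sub_cancel_left])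
    _ = _ := by
        rw [div_pow, ← pow_mul]
        field_simp
        ring

/-- for `1 ≤ m ≤ n`,
`R_m(m,n) ≤ 2^n C(n,m) (2^{-m} C(m,⌊m/2⌋))^{n-m}`. -/
theorem stmt11 (m n : ℕ) (hm : 1 ≤ m) (hmn : m ≤ n) :
    Rm m m n ≤
      2 ^ n * (n.choose m : ℝ) * ((m.choose (m / 2) : ℝ) / 2 ^ m) ^ (n - m) :=
  stmt11_general m n hmn
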